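/- arXiv:2010.10335 — 2 statements merged into one kernel-verified Lean document; each statement's English description precedes it below -/
import Mathlib

section
/- For all natural numbers n, (A·B)^n·A − B·(A·B)^n = P(2n+1)·[[-1,0],[0,1]], where A=[[1,1],[1,2]], B=[[2,1],[1,1]], and P is the Pell sequence. -/
/-! The matrices `!![a, b; 2 * b, a]` multiply like the numbers `a + b√2`. Under this correspondence
`A * B = !![3, 2; 4, 3]` is `3 + 2√2 = (1 + √2)²`, and `(1 + √2)ᵐ = (P(m+1) - P(m)) + P(m)√2`, so
`(A * B)ⁿ = !![a, b; 2 * b, a]` with `a + b = P(2n+1)`. For any matrix of that shape, `M * A - B * M`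
is `(a + b) • !![-1, 0; 0, 1]`. -/

def A : Matrix (Fin 2) (Fin 2) ℤ := !![1,1;1,2]
def B : Matrix (Fin 2) (Fin 2) ℤ := !![2,1;1,1]
/-- matrix of a word: `false` is the letter `a`, `true` is the letter `b` -/
def Mw (w : List Bool) : Matrix (Fin 2) (Fin 2) ℤ :=
  (w.map (fun x => if x then B else A)).prod
/-- the m-value: the top-right entry -/
def mval (w : List Bool) : ℤ := Mw w 0 1
def U : Matrix (Fin 2) (Fin 2) ℤ := !![0,-1;1,0]
def J : Matrix (Fin 2) (Fin 2) ℤ := !![0,1;1,0]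
/-- reversal with letters exchanged -/
def Ebar (w : List Bool) : List Bool := (w.map (fun x => !x)).reverse
def pell : ℕ → ℕ
  | 0 => 0
  | 1 => 1
  | n+2 => 2 * pell (n+1) + pell n

lemma pell_add_two (n : ℕ) : pell (n + 2) = 2 * pell (n + 1) + pell n := rfl

def pellMatrix : Matrix (Fin 2) (Fin 2) ℤ := !![1, 1; 2, 1]

lemma pellMatrix_pow (m : ℕ) :
    pellMatrix ^ m =
      !![(pell (m + 1) : ℤ) - pell m, pell m; 2 * pell m, (pell (m + 1) : ℤ) - pell m] := by
  induction m with
  | zero => simp [pell, Matrix.one_fin_two]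
  | succ m ih =>
    have hrec : (pell (m + 2) : ℤ) = 2 * pell (m + 1) + pell m := mod_cast pell_add_two m
    rw [pow_succ, ih, pellMatrix, Matrix.mul_fin_two, hrec]
    ext i j
    fin_cases i <;> fin_cases j <;> simp <;> ring

lemma A_mul_B_eq_pellMatrix_sq : A * B = pellMatrix ^ 2 := by
  simp only [A, B, pellMatrix, sq, Matrix.mul_fin_two]
  norm_num

lemma mul_A_sub_B_mul_eq_smul (a b : ℤ) :
    !![a, b; 2 * b, a] * A - B * !![a, b; 2 * b, a] = (a + b) • !![-1, 0; 0, 1] := by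
  ext i j
  fin_cases i <;> fin_cases j <;> simp [A, B] <;> ring

theorem stmt9 (n : ℕ) :
    (A * B) ^ n * A - B * (A * B) ^ n = (pell (2*n+1) : ℤ) • !![-1,0;0,1] := by
  rw [A_mul_B_eq_pellMatrix_sq, ← pow_mul, pellMatrix_pow, mul_A_sub_B_mul_eq_smul, sub_add_cancel]
end

section
/- Let w₁, w₂, z be words over {a,b} and suppose w₂ = w₁·u₂ for some word u₂ (i.e. w₁ is a prefix of w₂). Then m(w̄₁·a·z·b·w₂) < m(w̄₁·b·z̄·a·w₂), where w̄ denotes word reversal and m is the top-right entry of the matrix product under M(a)=[[1,1],[1,2]], M(b)=[[2,1],[1,1]]. -/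
/-!
Both letter matrices are symmetric, so `M(w̄) = M(w)ᵀ`. With `P = M(w₁)`,
`N = A * M(z) * B` and `R = M(u₂)`, the two words evaluate to `Pᵀ * Nᵀ * P * R` and
`Pᵀ * N * P * R`. Their difference only sees the antisymmetric part `Nᵀ - N`, a multiple of the
rotation `U`, and `Pᵀ * U * P = det P • U = U`; hence the two `m`-values differ by
`(M₀₀ + 3 M₁₀ + M₁₁) * R₁₁` with `M = M(z)`, which is positive because word matrices have
nonnegative entries and bottom-right entry at least one.
-/

open Matrix

lemma Mw_cons (x : Bool) (w : List Bool) : Mw (x :: w) = (if x then B else A) * Mw w := by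
  simp [Mw]

lemma Mw_append (x y : List Bool) : Mw (x ++ y) = Mw x * Mw y := by
  simp [Mw, List.prod_append]

lemma Mw_false : Mw [false] = A := by simp [Mw]

lemma Mw_true : Mw [true] = B := by simp [Mw]

lemma A_transpose : Aᵀ = A := by
  ext i j; fin_cases i <;> fin_cases j <;> rfl

lemma B_transpose : Bᵀ = B := by
  ext i j; fin_cases i <;> fin_cases j <;> rfl

lemma Mw_reverse (w : List Bool) : Mw w.reverse = (Mw w)ᵀ := by
  rw [Mw, Mw, transpose_list_prod, List.map_reverse, List.map_map]
  congr 3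
  funext x
  cases x <;> simp [A_transpose, B_transpose]

lemma det_Mw (w : List Bool) : (Mw w).det = 1 := by
  induction w with
  | nil => simp [Mw]
  | cons x w ih =>
    rw [Mw_cons, det_mul, ih]
    cases x <;> simp [A, B, det_fin_two_of]

lemma Mw_apply_nonneg (w : List Bool) (i j : Fin 2) : 0 ≤ Mw w i j := by
  induction w generalizing i with
  | nil => fin_cases i <;> fin_cases j <;> simp [Mw]
  | cons x w ih =>
    rw [Mw_cons, mul_apply]
    refine Finset.sum_nonneg fun k _ => mul_nonneg ?_ (ih k)
    cases x <;> fin_cases i <;> fin_cases k <;> simp [A, B]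

lemma one_le_Mw_one_one (w : List Bool) : 1 ≤ Mw w 1 1 := by
  induction w with
  | nil => simp [Mw]
  | cons x w ih =>
    have := Mw_apply_nonneg w 0 1
    rw [Mw_cons, mul_apply, Fin.sum_univ_two]
    cases x <;> simp [A, B] <;> linarith

lemma transpose_mul_U_mul (P : Matrix (Fin 2) (Fin 2) ℤ) : Pᵀ * U * P = P.det • U := by
  ext i j; fin_cases i <;> fin_cases j <;>
    simp [U, mul_apply, Fin.sum_univ_two, det_fin_two] <;> ring

lemma transpose_sub_self (N : Matrix (Fin 2) (Fin 2) ℤ) : Nᵀ - N = (N 0 1 - N 1 0) • U := by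
  ext i j; fin_cases i <;> fin_cases j <;> simp [U]

lemma A_mul_mul_B_apply_zero_one_sub_apply_one_zero (M : Matrix (Fin 2) (Fin 2) ℤ) :
    (A * M * B) 0 1 - (A * M * B) 1 0 = -(M 0 0 + 3 * M 1 0 + M 1 1) := by
  simp [A, B, mul_apply, Fin.sum_univ_two, vecMul, dotProduct]; ring

lemma transpose_congruence_sub_apply_zero_one (P M R : Matrix (Fin 2) (Fin 2) ℤ) :
    (Pᵀ * B * Mᵀ * A * P * R) 0 1 - (Pᵀ * A * M * B * P * R) 0 1
      = (M 0 0 + 3 * M 1 0 + M 1 1) * P.det * R 1 1 := by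
  have hN : (A * M * B)ᵀ = B * Mᵀ * A := by
    simp only [transpose_mul, A_transpose, B_transpose, Matrix.mul_assoc]
  have hdiff : Pᵀ * B * Mᵀ * A * P * R - Pᵀ * A * M * B * P * R
      = Pᵀ * ((A * M * B)ᵀ - A * M * B) * P * R := by
    rw [hN]; simp only [Matrix.mul_sub, Matrix.sub_mul, Matrix.mul_assoc]
  rw [← Matrix.sub_apply, hdiff, transpose_sub_self, A_mul_mul_B_apply_zero_one_sub_apply_one_zero, Matrix.mul_smul,
    Matrix.smul_mul, Matrix.smul_mul, transpose_mul_U_mul]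
  simp [U, vecMul, dotProduct]; ring

theorem stmt10 (w₁ w₂ z : List Bool) (h : w₁ <+: w₂) :
    mval (w₁.reverse ++ [false] ++ z ++ [true] ++ w₂) <
    mval (w₁.reverse ++ [true] ++ z.reverse ++ [false] ++ w₂) := by
  obtain ⟨u, rfl⟩ := h
  have hsub := transpose_congruence_sub_apply_zero_one (Mw w₁) (Mw z) (Mw u)
  simp only [← Mw_reverse, ← Mw_false, ← Mw_true, ← Mw_append, det_Mw, mul_one] at hsub
  rw [← sub_pos]
  simp only [mval, ← List.append_assoc]
  rw [hsub]
  refine mul_pos ?_ (one_pos.trans_le (one_le_Mw_one_one u))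
  linarith [Mw_apply_nonneg z 0 0, Mw_apply_nonneg z 1 0, one_le_Mw_one_one z]
end
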